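/- arXiv:2602.16152 — 2 statements merged into one kernel-verified Lean document; each statement's English description precedes it below -/
import Mathlib

section
/- For every n ≥ 1, the n-th Fibonacci word factorizes as F_n = S_0 S_1 ⋯ S_{n-2} · S_{(n-1) mod 2}, i.e., the concatenation of the singular words S_0 through S_{n-2} followed by the singular word S_{(n-1) mod 2}. -/
/-- Fibonacci numbers: f 0 = f 1 = 1, f (n+2) = f (n+1) + f n. -/
def fib : ℕ → ℕ
  | 0 => 1
  | 1 => 1
  | n + 2 => fib (n + 1) + fib n

/-- Fibonacci words over {a, b}; `false` encodes `a`, `true` encodes `b`. -/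
def F : ℕ → List Bool
  | 0 => [true]
  | 1 => [false]
  | n + 2 => F (n + 1) ++ F n

/-- Singular words: S 0 = a, S 1 = b, S 2 = S 0 · S₋₁ · S 0 = aa,
and S n = S (n-2) · S (n-3) · S (n-2) for n ≥ 3. -/
def S : ℕ → List Bool
  | 0 => [false]
  | 1 => [true]
  | 2 => [false, false]
  | n + 3 => S (n + 1) ++ S n ++ S (n + 1)

lemma P_succ (n : ℕ) :
    ((List.range (n + 1)).map S).flatten = ((List.range n).map S).flatten ++ S n := by
  rw [List.range_succ, List.map_append, List.flatten_append]
  simp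

lemma S_eq : ∀ n : ℕ, S (n + 1) = S ((n + 1) % 2) ++ ((List.range n).map S).flatten
  | 0 => by simp [S]
  | 1 => by simp [S, List.range_succ]
  | n + 2 => by
    have h := S_eq n
    rw [show n + 2 + 1 = n + 1 + 2 from rfl, S, P_succ, P_succ]
    rw [show (n + 1 + 2) % 2 = (n + 1) % 2 from Nat.add_mod_right (n + 1) 2]
    rw [h]
    simp [List.append_assoc]

lemma F_eq : ∀ n : ℕ, F (n + 1) = ((List.range n).map S).flatten ++ S (n % 2)
  | 0 => by simp [F, S]
  | 1 => by simp [F, S, List.range_succ]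
  | n + 2 => by
    have h1 := F_eq (n + 1)
    have h0 := F_eq n
    rw [show n + 2 + 1 = n + 1 + 2 from rfl, F, h1, h0,
      show (n + 2) % 2 = n % 2 from Nat.add_mod_right n 2,
      P_succ (n + 1), P_succ n, S_eq n]
    simp [List.append_assoc]

/-- For every n ≥ 1, the n-th Fibonacci word factorizes as
F_n = S_0 S_1 ⋯ S_{n-2} · S_{(n-1) mod 2}. -/
theorem fib_word_eq_singular_factorization :
    ∀ n : ℕ, 1 ≤ n →
      F n = ((List.range (n - 1)).map S).flatten ++ S ((n - 1) % 2) := by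
  rintro (_ | n) h
  · omega
  · simpa using F_eq n
end

section
/- For every k ≥ 0, the singular word S_k occurs exactly once as a substring of the concatenation S_0 S_1 ⋯ S_k, namely as its suffix of length f_k; equivalently, with 1-based positions, this unique occurrence spans exactly the positions f_{k+1} through f_{k+2} − 1 of S_0 S_1 ⋯ S_k. -/
/-- `w` occurs in `T` at (1-based) position `i`, i.e. `w = T[i .. i + |w| - 1]`. -/
def OccursAt {α : Type*} (T w : List α) (i : ℕ) : Prop :=
  1 ≤ i ∧ i + w.length ≤ T.length + 1 ∧ (T.drop (i - 1)).take w.length = w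

/-- The last letter of `F (n+?)`, alternating. -/
def l (n : ℕ) : Bool := decide (n % 2 = 0)

lemma l_two (n : ℕ) : l (n + 2) = l n := by
  unfold l; rw [Nat.add_mod_right]

lemma fib_pos : ∀ n, 1 ≤ fib n
  | 0 => le_refl _
  | 1 => le_refl _
  | n + 2 => by have := fib_pos n; have := fib_pos (n+1); show 1 ≤ fib (n+1) + fib n; omega

lemma le_fib : ∀ n, n ≤ fib n
  | 0 => by omega
  | 1 => le_refl _
  | n + 2 => by
      have := le_fib (n+1); have := fib_pos n
      show n + 2 ≤ fib (n+1) + fib n; omega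

lemma len_F : ∀ n, (F n).length = fib n
  | 0 => rfl
  | 1 => rfl
  | n + 2 => by
      show (F (n+1) ++ F n).length = fib (n+1) + fib n
      rw [List.length_append, len_F (n+1), len_F n]

/-- Key structural lemma: `S (n+1)` is `F (n+1)` with last letter moved to the front
(in the form of an append identity). -/
lemma K : ∀ n, l n :: F (n + 1) = S (n + 1) ++ [l (n + 1)]
  | 0 => by decide
  | 1 => by decide
  | 2 => by decide
  | m + 3 => by
      have h0 := K m
      have h1 := K (m + 1)
      have hS : S (m + 4) = S (m + 2) ++ S (m + 1) ++ S (m + 2) := rfl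
      have hF : F (m + 4) = F (m + 2) ++ F (m + 1) ++ F (m + 2) := by
        rw [show F (m+4) = F (m+3) ++ F (m+2) from rfl, show F (m+3) = F (m+2) ++ F (m+1) from rfl]
      have l42 : l (m + 4) = l (m + 2) := l_two _
      have l31 : l (m + 3) = l (m + 1) := l_two _
      have l2m : l (m + 2) = l m := l_two _
      show l (m + 3) :: F (m + 4) = S (m + 4) ++ [l (m + 4)]
      calc l (m + 3) :: F (m + 4)
          = (l (m + 1) :: F (m + 2)) ++ (F (m + 1) ++ F (m + 2)) := by
            rw [l31, hF]; simp [List.append_assoc]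
        _ = (S (m + 2) ++ [l (m + 2)]) ++ (F (m + 1) ++ F (m + 2)) := by rw [h1]
        _ = S (m + 2) ++ ((l m :: F (m + 1)) ++ F (m + 2)) := by
            rw [l2m]; simp [List.append_assoc]
        _ = S (m + 2) ++ ((S (m + 1) ++ [l (m + 1)]) ++ F (m + 2)) := by rw [h0]
        _ = S (m + 2) ++ (S (m + 1) ++ (l (m + 1) :: F (m + 2))) := by
            simp [List.append_assoc]
        _ = S (m + 2) ++ (S (m + 1) ++ (S (m + 2) ++ [l (m + 2)])) := by rw [h1]
        _ = S (m + 4) ++ [l (m + 4)] := by rw [hS, l42]; simp [List.append_assoc]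

lemma len_S : ∀ k, (S k).length = fib k
  | 0 => rfl
  | n + 1 => by
      have h := congrArg List.length (K n)
      simp only [List.length_cons, List.length_append, List.length_singleton,
        List.length_nil, len_F] at h
      show (S (n+1)).length = fib (n+1)
      omega

/-- The count of `true` in `S k` differs from that in `F k`. -/
lemma cnt_S_ne : ∀ k, (S k).count true ≠ (F k).count true
  | 0 => by decide
  | n + 1 => by
      have h := congrArg (List.count true) (K n)
      simp only [List.count_cons, List.count_append] at h
      have l2 : l (n + 2) = l n := l_two n
      rcases Nat.mod_two_eq_zero_or_one n with hp | hp
      · have e1 : l n = true := by simp [l, hp]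
        have e2 : l (n + 1) = false := by simp [l, Nat.add_mod, hp]
        rw [e1, e2] at h
        simp at h
        omega
      · have e1 : l n = false := by simp [l, hp]
        have e2 : l (n + 1) = true := by simp [l, Nat.add_mod, hp]
        rw [e1, e2] at h
        simp at h
        omega

lemma F_prefix : ∀ m n, 1 ≤ m → m ≤ n → F m <+: F n := by
  intro m n h1 h2
  induction n, h2 using Nat.le_induction with
  | base => exact List.prefix_rfl
  | succ n hmn ih =>
      obtain ⟨n', rfl⟩ : ∃ n', n = n' + 1 := ⟨n - 1, by omega⟩
      exact ih.trans (show F (n'+1) <+: F (n'+2) from List.prefix_append _ _)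

/-- Prefix counts of the (limit) Fibonacci word. -/
def B (j : ℕ) : ℕ := ((F (j + 2)).take j).count true

lemma take_of_prefix {a b : List Bool} (h : a <+: b) {j : ℕ} (hj : j ≤ a.length) :
    b.take j = a.take j := by
  obtain ⟨t, rfl⟩ := h
  rw [List.take_append_of_le_length hj]

lemma cnt_take (m j : ℕ) (hm : 1 ≤ m) (hj : j ≤ fib m) :
    ((F m).take j).count true = B j := by
  rcases le_total m (j + 2) with h | h
  · have hp := F_prefix m (j + 2) hm h
    have he : (F (j + 2)).take j = (F m).take j :=
      take_of_prefix hp (by rw [len_F]; exact hj)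
    rw [B, he]
  · have hp := F_prefix (j + 2) m (by omega) h
    have he : (F m).take j = (F (j + 2)).take j :=
      take_of_prefix hp (by rw [len_F]; exact le_trans (by omega) (le_fib (j + 2)))
    rw [he]; rfl

lemma B_fib (m : ℕ) (hm : 1 ≤ m) : B (fib m) = (F m).count true := by
  rw [← cnt_take m (fib m) hm le_rfl, ← len_F m, List.take_length]

lemma B_add (m t len : ℕ) (hm : 1 ≤ m) (h : t + len ≤ fib m) :
    B t + (((F m).drop t).take len).count true = B (t + len) := by
  have h1 := cnt_take m (t + len) hm h
  rw [List.take_add, List.count_append, cnt_take m t hm (by omega)] at h1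
  exact h1

lemma S1 (k s : ℕ) (hk : 1 ≤ k) (hs : s ≤ fib k) :
    B (fib (k + 1) + s) = B (fib (k + 1)) + B s := by
  have hfib : fib (k + 2) = fib (k + 1) + fib k := rfl
  have h1 : ((F (k + 2)).take (fib (k + 1) + s)).count true = B (fib (k + 1) + s) :=
    cnt_take _ _ (by omega) (by omega)
  rw [List.take_add] at h1
  have e1 : (F (k + 2)).take (fib (k + 1)) = F (k + 1) := by
    rw [show F (k+2) = F (k+1) ++ F k from rfl, ← len_F (k+1), List.take_left]
  have e2 : (F (k + 2)).drop (fib (k + 1)) = F k := by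
    rw [show F (k+2) = F (k+1) ++ F k from rfl, ← len_F (k+1), List.drop_left]
  rw [e1, e2, List.count_append, cnt_take k s hk hs] at h1
  rw [← h1, B_fib (k + 1) (by omega)]

/-- Main counting lemma: windows of length `fib k` strictly before the singular
occurrence all have the same `true`-count as `F k`. -/
lemma W : ∀ k t, t + fib k + 2 ≤ fib (k + 2) → B (t + fib k) = B t + (F k).count true
  | 0, t, ht => by
      have e1 : fib (0 + 2) = 2 := rfl
      have e2 : fib 0 = 1 := rfl
      omega
  | 1, t, ht => by
      have h3 : fib (1 + 2) = 3 := rfl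
      have h1 : fib 1 = 1 := rfl
      have : t = 0 := by omega
      subst this; decide
  | 2, t, ht => by
      have h4 : fib (2 + 2) = 5 := rfl
      have h2 : fib 2 = 2 := rfl
      have : t = 0 ∨ t = 1 := by omega
      rcases this with rfl | rfl <;> decide
  | m + 3, t, ht => by
      have f5 : fib (m + 3 + 2) = fib (m + 4) + fib (m + 3) := rfl
      have f4 : fib (m + 4) = fib (m + 3) + fib (m + 2) := rfl
      have f4' : fib (m + 2 + 2) = fib (m + 4) := rfl
      have f4'' : fib (m + 3 + 1) = fib (m + 4) := rfl
      have f3 : fib (m + 3) = fib (m + 2) + fib (m + 1) := rfl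
      by_cases hc : t ≤ fib (m + 2)
      · rw [Nat.add_comm t (fib (m + 3)),
          show fib (m + 3) = fib ((m + 2) + 1) from rfl,
          S1 (m + 2) t (by omega) hc, B_fib (m + 3) (by omega)]
        omega
      · push_neg at hc
        set s := t - fib (m + 2) with hsdef
        have hts : t = s + fib (m + 2) := by omega
        have hs2 : s + 2 ≤ fib (m + 3) := by omega
        have h1 : t + fib (m + 3) = fib (m + 4) + s := by omega
        rw [h1, show fib (m + 4) = fib ((m + 3) + 1) from rfl,
          S1 (m + 3) s (by omega) (by omega), f4'']
        have h2 : B t = B s + (F (m + 2)).count true := by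
          rw [hts]; exact W (m + 2) s (by omega)
        have h3 : B (fib (m + 4)) = (F (m + 3)).count true + (F (m + 2)).count true := by
          rw [B_fib (m + 4) (by omega),
            show F (m + 4) = F (m + 3) ++ F (m + 2) from rfl, List.count_append]
        omega

/-- The concatenation S_0 ⋯ S_k followed by the alternating letter is `F (k+2)`. -/
lemma U : ∀ k, ((List.range (k + 1)).map S).flatten ++ [l k] = F (k + 2)
  | 0 => by decide
  | k + 1 => by
      have hu := U k
      have hk := K k
      have hs : ((List.range (k + 2)).map S).flatten
          = ((List.range (k + 1)).map S).flatten ++ S (k + 1) := by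
        rw [List.range_succ]; simp
      rw [hs, show F (k + 3) = F (k + 2) ++ F (k + 1) from rfl, ← hu]
      calc (((List.range (k + 1)).map S).flatten ++ S (k + 1)) ++ [l (k + 1)]
          = ((List.range (k + 1)).map S).flatten ++ (S (k + 1) ++ [l (k + 1)]) := by
            simp [List.append_assoc]
        _ = ((List.range (k + 1)).map S).flatten ++ (l k :: F (k + 1)) := by rw [← hk]
        _ = (((List.range (k + 1)).map S).flatten ++ [l k]) ++ F (k + 1) := by
            simp [List.append_assoc]

lemma len_u : ∀ k, (((List.range k).map S).flatten).length + 1 = fib (k + 1)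
  | 0 => rfl
  | k + 1 => by
      have h := congrArg List.length (U k)
      rw [List.length_append, len_F] at h
      simpa using h

/-- For every k ≥ 0, the singular word S_k occurs exactly once in
S_0 S_1 ⋯ S_k, namely as its suffix of length f_k; with 1-based positions, the
unique occurrence starts at position f_{k+1} and ends at position f_{k+2} − 1. -/
theorem singular_unique_occurrence :
    ∀ k : ℕ,
      (∀ i : ℕ, OccursAt (((List.range (k + 1)).map S).flatten) (S k) i ↔ i = fib (k + 1)) ∧
      S k <:+ ((List.range (k + 1)).map S).flatten ∧
      (S k).length = fib k ∧
      fib (k + 1) + (S k).length = fib (k + 2) := by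
  intro k
  set T := ((List.range (k + 1)).map S).flatten with hT
  have hsplit : T = ((List.range k).map S).flatten ++ S k := by
    rw [hT, List.range_succ]; simp
  have hlen' : (((List.range k).map S).flatten).length + 1 = fib (k + 1) := len_u k
  have hlenT : T.length + 1 = fib (k + 2) := len_u (k + 1)
  have hlS : (S k).length = fib k := len_S k
  have hfib : fib (k + 2) = fib (k + 1) + fib k := rfl
  have hfp := fib_pos (k + 1)
  refine ⟨?_, ⟨_, hsplit.symm⟩, hlS, by omega⟩
  intro i
  constructor
  · rintro ⟨h1, h2, h3⟩
    rw [hlS] at h2 h3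
    set t := i - 1 with htdef
    have hit : i = t + 1 := by omega
    have h2' : t + fib k + 1 ≤ fib (k + 2) := by omega
    have hTpre : T = (F (k + 2)).take T.length := by
      rw [← U k, List.take_left]
    have hwin : ((F (k + 2)).drop t).take (fib k) = S k := by
      rw [← h3, hTpre, List.drop_take, List.take_take,
        Nat.min_eq_left (by omega : fib k ≤ T.length - t)]
    by_cases hcase : t + fib k + 2 ≤ fib (k + 2)
    · exfalso
      have hB := B_add (k + 2) t (fib k) (by omega) (by omega)
      rw [hwin] at hB
      have hW := W k t hcase
      have hne := cnt_S_ne k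
      omega
    · omega
  · rintro rfl
    refine ⟨by omega, by rw [hlS]; omega, ?_⟩
    rw [hsplit, show fib (k + 1) - 1 = (((List.range k).map S).flatten).length from by omega,
      List.drop_left, List.take_length]
end
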